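/- Let a₀, …, a_k be real numbers and 0 = n₀ < n₁ < ⋯ < n_k integers. If the polynomial p(z) = ∑_{j=0}^k a_j z^{n_j} has a zero on the unit circle, then the quadratic form Q(x) = ∑_{n∈ℤ} (∑_{j=0}^k a_j x_{n+n_j})² is not strongly positive definite: for every c > 0 there exists x ∈ ℓ²(ℤ) with x ≠ 0 and Q(x) < c ‖x‖². -/

import Mathlib

/-!
Let `z` be a root of `p` with `‖z‖ = 1` and let `y` be the truncated sequence `y_m = z^m` for
`0 ≤ m < N`, zero elsewhere. Since `∑ⱼ aⱼ z^{m+nⱼ} = z^m p(z) = 0`, the filtered sequence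
`m ↦ ∑ⱼ aⱼ y_{m+nⱼ}` vanishes except on two strips of width `2 max |nⱼ|` around the ends of
`[0, N)`, where it is bounded by `∑ⱼ |aⱼ|`; so `Q(Re y) + Q(Im y)` is bounded independently of
`N`, whereas `‖Re y‖² + ‖Im y‖² = N`. For large `N`, `Re y` or `Im y` is the required sequence.
-/

open Finset

section ShiftSum

variable {ι : Type*} [Fintype ι]

def shiftSum {E : Type*} [AddCommGroup E] [Module ℝ E] (a : ι → ℝ) (n : ι → ℤ) (x : ℤ → E)
    (m : ℤ) : E :=
  ∑ j, a j • x (m + n j)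

lemma shiftSum_comp_linearMap {E F : Type*} [AddCommGroup E] [Module ℝ E] [AddCommGroup F]
    [Module ℝ F] (a : ι → ℝ) (n : ι → ℤ) (f : E →ₗ[ℝ] F) (x : ℤ → E) (m : ℤ) :
    shiftSum a n (f ∘ x) m = f (shiftSum a n x m) := by
  simp [shiftSum, map_sum, map_smul]

lemma norm_shiftSum_le {E : Type*} [SeminormedAddCommGroup E] [NormedSpace ℝ E]
    (a : ι → ℝ) (n : ι → ℤ) {x : ℤ → E} {B : ℝ} (hx : ∀ m, ‖x m‖ ≤ B) (m : ℤ) :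
    ‖shiftSum a n x m‖ ≤ (∑ j, |a j|) * B := by
  rw [sum_mul]
  refine (norm_sum_le _ _).trans (sum_le_sum fun j _ => ?_)
  rw [norm_smul, Real.norm_eq_abs]
  exact mul_le_mul_of_nonneg_left (hx _) (abs_nonneg _)

end ShiftSum

noncomputable def truncatedPowers (z : ℂ) (N : ℕ) : ℤ → ℂ :=
  (Set.Ico 0 (N : ℤ)).indicator (z ^ ·)

lemma norm_truncatedPowers_le {z : ℂ} (hz : ‖z‖ = 1) (N : ℕ) (m : ℤ) :
    ‖truncatedPowers z N m‖ ≤ 1 :=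
  (norm_indicator_le_norm_self _ _).trans_eq (by simp [norm_zpow, hz])

lemma summable_sq_comp_truncatedPowers {z : ℂ} {N : ℕ} {f : ℂ → ℝ} (hf : f 0 = 0) :
    Summable fun m => f (truncatedPowers z N m) ^ 2 :=
  summable_of_ne_finset_zero (s := Ico 0 (N : ℤ)) fun m hm => by
    rw [truncatedPowers, Set.indicator_of_notMem (by simpa using hm), hf, sq, mul_zero]

lemma tsum_sq_re_add_tsum_sq_im_truncatedPowers {z : ℂ} (hz : ‖z‖ = 1) (N : ℕ) :
    ∑' m, (truncatedPowers z N m).re ^ 2 + ∑' m, (truncatedPowers z N m).im ^ 2 = N := by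
  have hzero : ∀ m ∉ Ico (0 : ℤ) N, truncatedPowers z N m = 0 := fun m hm =>
    Set.indicator_of_notMem (by simpa using hm) _
  rw [tsum_eq_sum (s := Ico 0 (N : ℤ)) fun m hm => by simp [hzero m hm],
    tsum_eq_sum (s := Ico 0 (N : ℤ)) fun m hm => by simp [hzero m hm], ← sum_add_distrib]
  calc ∑ m ∈ Ico (0 : ℤ) N, ((truncatedPowers z N m).re ^ 2 + (truncatedPowers z N m).im ^ 2)
      = ∑ m ∈ Ico (0 : ℤ) N, ‖z ^ m‖ ^ 2 := sum_congr rfl fun m hm => by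
        rw [truncatedPowers, Set.indicator_of_mem (by simpa using hm)]
        linarith [Complex.sq_norm_sub_sq_re (z ^ m)]
    _ = N := by simp [norm_zpow, hz]

lemma card_strip_le (D N : ℕ) : #(Ico (-D : ℤ) D ∪ Ico ((N : ℤ) - D) (N + D)) ≤ 4 * D := by
  refine (card_union_le _ _).trans ?_
  simp only [Int.card_Ico]
  omega

section RootOnUnitCircle

variable {ι : Type*} [Fintype ι] {a : ι → ℝ} {n : ι → ℤ} {z : ℂ} {D : ℕ}

lemma shiftSum_truncatedPowers_eq_zero (hz : z ≠ 0) (hp : ∑ j, (a j : ℂ) * z ^ n j = 0)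
    (hD : ∀ j, |n j| ≤ D) {N : ℕ} {m : ℤ}
    (hm : m ∉ Ico (-D : ℤ) D ∪ Ico ((N : ℤ) - D) (N + D)) :
    shiftSum a n (truncatedPowers z N) m = 0 := by
  simp only [mem_union, mem_Ico, not_or, not_and_or, not_le, not_lt] at hm
  have hnD j : -(D : ℤ) ≤ n j ∧ n j ≤ D := abs_le.1 (hD j)
  obtain hout | ⟨hlo, hhi⟩ | hout : m < -D ∨ (D ≤ m ∧ m < N - D) ∨ N + D ≤ m := by omega
  · refine sum_eq_zero fun j _ => ?_
    rw [truncatedPowers, Set.indicator_of_notMem (by have := hnD j; simp; omega), smul_zero]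
  · calc shiftSum a n (truncatedPowers z N) m = z ^ m * ∑ j, (a j : ℂ) * z ^ n j := by
          rw [mul_sum]
          refine sum_congr rfl fun j _ => ?_
          rw [truncatedPowers, Set.indicator_of_mem (by have := hnD j; simp; omega),
            Complex.real_smul, zpow_add₀ hz]
          ring
      _ = 0 := by rw [hp, mul_zero]
  · refine sum_eq_zero fun j _ => ?_
    rw [truncatedPowers, Set.indicator_of_notMem (by have := hnD j; simp; omega), smul_zero]

lemma tsum_sq_shiftSum_re_add_tsum_sq_shiftSum_im_le (hz : ‖z‖ = 1)
    (hp : ∑ j, (a j : ℂ) * z ^ n j = 0) (hD : ∀ j, |n j| ≤ D) (N : ℕ) :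
    ∑' m, shiftSum a n (fun k => (truncatedPowers z N k).re) m ^ 2 +
      ∑' m, shiftSum a n (fun k => (truncatedPowers z N k).im) m ^ 2 ≤
        4 * D * (∑ j, |a j|) ^ 2 := by
  set w := shiftSum a n (truncatedPowers z N)
  set T := Ico (-D : ℤ) D ∪ Ico ((N : ℤ) - D) (N + D)
  have hz0 : z ≠ 0 := by rintro rfl; simp at hz
  have hw : ∀ m ∉ T, w m = 0 := fun m hm => shiftSum_truncatedPowers_eq_zero hz0 hp hD hm
  have hre : shiftSum a n (fun k => (truncatedPowers z N k).re) = fun m => (w m).re :=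
    funext (shiftSum_comp_linearMap a n Complex.reLm _)
  have him : shiftSum a n (fun k => (truncatedPowers z N k).im) = fun m => (w m).im :=
    funext (shiftSum_comp_linearMap a n Complex.imLm _)
  rw [hre, him, tsum_eq_sum (s := T) fun m hm => by simp [hw m hm],
    tsum_eq_sum (s := T) fun m hm => by simp [hw m hm], ← sum_add_distrib]
  calc ∑ m ∈ T, ((w m).re ^ 2 + (w m).im ^ 2) = ∑ m ∈ T, ‖w m‖ ^ 2 :=
        sum_congr rfl fun m _ => by linarith [Complex.sq_norm_sub_sq_re (w m)]
    _ ≤ #T • (∑ j, |a j|) ^ 2 := sum_le_card_nsmul _ _ _ fun m _ => by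
        have hwm := norm_shiftSum_le a n (norm_truncatedPowers_le hz N) m
        rw [mul_one] at hwm
        gcongr
    _ ≤ 4 * D * (∑ j, |a j|) ^ 2 := by
        rw [nsmul_eq_mul]
        gcongr
        exact (Nat.cast_le.2 (card_strip_le D N)).trans_eq (by push_cast; ring)

end RootOnUnitCircle

lemma ne_zero_of_tsum_sq_lt {x y : ℤ → ℝ} {c : ℝ} (h : ∑' m, y m ^ 2 < c * ∑' m, x m ^ 2) :
    x ≠ 0 := by
  rintro rfl
  simp only [Pi.zero_apply, zero_pow two_ne_zero, tsum_zero, mul_zero] at h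
  exact h.not_ge (tsum_nonneg fun m => sq_nonneg _)

theorem stmt_12_general (k : ℕ) (n : Fin (k + 1) → ℤ) (a : Fin (k + 1) → ℝ)
    (hp : ∃ z : ℂ, ‖z‖ = 1 ∧ ∑ j : Fin (k + 1), (a j : ℂ) * z ^ (n j) = 0) :
    ∀ c : ℝ, 0 < c →
      ∃ x : ℤ → ℝ, Summable (fun m : ℤ => (x m) ^ 2) ∧ x ≠ 0 ∧
        ∑' m : ℤ, (∑ j : Fin (k + 1), a j * x (m + n j)) ^ 2 <
          c * ∑' m : ℤ, (x m) ^ 2 := by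
  intro c hc
  obtain ⟨z, hz, hpz⟩ := hp
  obtain ⟨D, hD⟩ : ∃ D : ℕ, ∀ j, |n j| ≤ D :=
    ⟨univ.sup fun j => (n j).natAbs, fun j => by
      rw [Int.abs_eq_natAbs]; exact_mod_cast le_sup (f := fun j => (n j).natAbs) (mem_univ j)⟩
  obtain ⟨N, hN⟩ := exists_nat_gt (4 * D * (∑ j, |a j|) ^ 2 / c)
  have hQ := tsum_sq_shiftSum_re_add_tsum_sq_shiftSum_im_le hz hpz hD N
  have hnorm := tsum_sq_re_add_tsum_sq_im_truncatedPowers hz N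
  rw [div_lt_iff₀ hc] at hN
  by_cases hre : ∑' m, shiftSum a n (fun k => (truncatedPowers z N k).re) m ^ 2 <
      c * ∑' m, (truncatedPowers z N m).re ^ 2
  · exact ⟨_, summable_sq_comp_truncatedPowers Complex.zero_re, ne_zero_of_tsum_sq_lt hre, hre⟩
  · have him : ∑' m, shiftSum a n (fun k => (truncatedPowers z N k).im) m ^ 2 <
        c * ∑' m, (truncatedPowers z N m).im ^ 2 := by nlinarith
    exact ⟨_, summable_sq_comp_truncatedPowers Complex.zero_im, ne_zero_of_tsum_sq_lt him, him⟩

/-- If `p(z) = ∑_{j=0}^k a_j z^{n_j}` has a zero on the unit circle, then the quadratic form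
`Q(x) = ∑_{n∈ℤ} (∑_j a_j x_{n+n_j})²` is not strongly positive definite: for every `c > 0`
there is a nonzero `x ∈ ℓ²(ℤ)` with `Q(x) < c‖x‖²`. -/
theorem stmt_12 (k : ℕ) (n : Fin (k + 1) → ℤ) (a : Fin (k + 1) → ℝ)
    (hn0 : n 0 = 0) (hmono : StrictMono n)
    (hp : ∃ z : ℂ, ‖z‖ = 1 ∧ ∑ j : Fin (k + 1), (a j : ℂ) * z ^ (n j) = 0) :
    ∀ c : ℝ, 0 < c →
      ∃ x : ℤ → ℝ, Summable (fun m : ℤ => (x m) ^ 2) ∧ x ≠ 0 ∧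
        ∑' m : ℤ, (∑ j : Fin (k + 1), a j * x (m + n j)) ^ 2 <
          c * ∑' m : ℤ, (x m) ^ 2 :=
  stmt_12_general k n a hp
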